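/- Let g be a finite-dimensional complex Lie algebra admitting a periodic derivation (a derivation D with D^m = id for some m ≥ 1). Then g is nilpotent of class at most two, i.e., [g,[g,g]] = 0. -/

import Mathlib

/-!
The derivation `D` is semisimple with eigenvalues `m`-th roots of unity, and `⁅L_a, L_b⁆ ⊆ L_{a+b}`
for its eigenspaces `L_μ`. Three unit complex numbers `a`, `b`, `c` with `b + c` and `a + b + c`
also of norm one leave neither `a + b` nor `a + c` of norm one. So if `x`, `y`, `z` are
eigenvectors with `⁅x, ⁅y, z⁆⁆ ≠ 0`, then `⁅x, y⁆ = ⁅x, z⁆ = 0`, and the Jacobi identity gives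
`⁅x, ⁅y, z⁆⁆ = 0` after all. Eigenvectors span `L`, and the bracket is trilinear.
-/

open Module.End Polynomial ComplexConjugate

namespace Complex

/-- `|x| = |y| = |x + y| = 1` forces `y / x` to be a primitive cube root of unity. -/
theorem sq_add_mul_add_sq_eq_zero_of_norm_eq_one {x y : ℂ} (hx : ‖x‖ = 1) (hy : ‖y‖ = 1)
    (hxy : ‖x + y‖ = 1) : x ^ 2 + x * y + y ^ 2 = 0 := by
  have mul_conj_eq_one {w : ℂ} (hw : ‖w‖ = 1) : w * conj w = 1 := by
    rw [mul_conj, normSq_eq_norm_sq, hw]; norm_num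
  have h := mul_conj_eq_one hxy
  rw [map_add] at h
  linear_combination (x * y) * h - (x * y + y ^ 2) * mul_conj_eq_one hx
    - (x ^ 2 + x * y) * mul_conj_eq_one hy

theorem norm_add_ne_one_of_norm_eq_one {a b c : ℂ} (ha : ‖a‖ = 1) (hb : ‖b‖ = 1) (hc : ‖c‖ = 1)
    (hbc : ‖b + c‖ = 1) (habc : ‖a + (b + c)‖ = 1) : ‖a + b‖ ≠ 1 := by
  intro hab
  have e₁ := sq_add_mul_add_sq_eq_zero_of_norm_eq_one hb hc hbc
  have e₂ := sq_add_mul_add_sq_eq_zero_of_norm_eq_one ha hbc habc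
  have e₃ := sq_add_mul_add_sq_eq_zero_of_norm_eq_one ha hb hab
  have hc' : c * (a + b) = b ^ 2 := by linear_combination e₂ - e₃ - e₁
  have h : 2 * b ^ 3 * (a + b) = 0 := by
    linear_combination (a + b) ^ 2 * e₁ - (b * (a + b) + c * (a + b) + b ^ 2) * hc' - b ^ 2 * e₃
  have hb₀ : b ≠ 0 := by rintro rfl; simp at hb
  have hab₀ : a + b ≠ 0 := by intro h; simp [h] at hab
  exact hab₀ ((mul_eq_zero.mp h).resolve_left (by simp [hb₀]))

end Complex

namespace Module.End

variable {K V : Type*} [Field K] [AddCommGroup V] [Module K V]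

theorem HasEigenvalue.pow_eq_one_of_pow_eq_one {f : End K V} {μ : K} {m : ℕ}
    (hμ : f.HasEigenvalue μ) (hf : f ^ m = 1) : μ ^ m = 1 := by
  obtain ⟨v, hv⟩ := hμ.exists_hasEigenvector
  apply smul_left_injective K hv.2
  simpa [hf] using (hv.pow_apply m).symm

theorem isSemisimple_of_pow_eq_one {f : End K V} {m : ℕ} (hm : (m : K) ≠ 0) (hf : f ^ m = 1) :
    f.IsSemisimple :=
  isSemisimple_of_squarefree_aeval_eq_zero (X_pow_sub_one_separable_iff.mpr hm).squarefree
    (by simp [hf])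

theorem iSup_eigenspace_eq_top_of_pow_eq_one [IsAlgClosed K] [FiniteDimensional K V]
    {f : End K V} {m : ℕ} (hm : (m : K) ≠ 0) (hf : f ^ m = 1) : ⨆ μ, f.eigenspace μ = ⊤ :=
  (isSemisimple_of_pow_eq_one hm hf).iSup_eigenspace_eq_top

end Module.End

theorem LieDerivation.lie_mem_eigenspace {R L : Type*} [CommRing R] [LieRing L] [LieAlgebra R L]
    (D : LieDerivation R L L) {μ ν : R} {x y : L} (hx : x ∈ eigenspace D.toLinearMap μ)
    (hy : y ∈ eigenspace D.toLinearMap ν) : ⁅x, y⁆ ∈ eigenspace D.toLinearMap (μ + ν) := by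
  simp only [mem_eigenspace_iff, coeFn_coe] at *
  rw [apply_lie_eq_add, hx, hy, smul_lie, lie_smul, add_smul, add_comm]

theorem LieAlgebra.lie_lie_eq_zero_of_span_eq_top {R L : Type*} [CommRing R] [LieRing L]
    [LieAlgebra R L] {s : Set L} (hs : Submodule.span R s = ⊤)
    (h : ∀ x ∈ s, ∀ y ∈ s, ∀ z ∈ s, ⁅x, ⁅y, z⁆⁆ = 0) (x y z : L) : ⁅x, ⁅y, z⁆⁆ = 0 := by
  let T : L →ₗ[R] L →ₗ[R] Module.End R L :=
    (LinearMap.mul R (Module.End R L)).compl₁₂ (LieModule.toEnd R L L) (LieModule.toEnd R L L)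
  suffices T = 0 by simpa [T] using congr($this x y z)
  refine LinearMap.ext_on hs fun x hx ↦ LinearMap.ext_on hs fun y hy ↦ LinearMap.ext_on hs
    fun z hz ↦ ?_
  simpa [T] using h x hx y hy z hz

theorem LieDerivation.lie_lie_eq_zero_of_mem_eigenspace {L : Type*} [LieRing L]
    [LieAlgebra ℂ L] (D : LieDerivation ℂ L L)
    (hD : ∀ μ, HasEigenvalue D.toLinearMap μ → ‖μ‖ = 1) {a b c : ℂ} {x y z : L}
    (hx : x ∈ eigenspace D.toLinearMap a) (hy : y ∈ eigenspace D.toLinearMap b)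
    (hz : z ∈ eigenspace D.toLinearMap c) : ⁅x, ⁅y, z⁆⁆ = 0 := by
  have norm_eq_one {μ : ℂ} {w : L} (hw : w ∈ eigenspace D.toLinearMap μ) (hw₀ : w ≠ 0) :
      ‖μ‖ = 1 :=
    hD μ (hasEigenvalue_of_hasEigenvector ⟨hw, hw₀⟩)
  by_contra hxyz
  have hyz : ⁅y, z⁆ ≠ 0 := by intro h; simp [h] at hxyz
  have hx₀ : x ≠ 0 := by rintro rfl; simp at hxyz
  have hy₀ : y ≠ 0 := by rintro rfl; simp at hyz
  have hz₀ : z ≠ 0 := by rintro rfl; simp at hyz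
  have ha := norm_eq_one hx hx₀
  have hb := norm_eq_one hy hy₀
  have hc := norm_eq_one hz hz₀
  have hbc := norm_eq_one (D.lie_mem_eigenspace hy hz) hyz
  have habc := norm_eq_one (D.lie_mem_eigenspace hx (D.lie_mem_eigenspace hy hz)) hxyz
  have hxy : ⁅x, y⁆ = 0 := by
    by_contra h
    exact Complex.norm_add_ne_one_of_norm_eq_one ha hb hc hbc habc
      (norm_eq_one (D.lie_mem_eigenspace hx hy) h)
  have hxz : ⁅x, z⁆ = 0 := by
    by_contra h
    rw [add_comm b c] at hbc habc
    exact Complex.norm_add_ne_one_of_norm_eq_one ha hc hb hbc habc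
      (norm_eq_one (D.lie_mem_eigenspace hx hz) h)
  exact hxyz (by rw [leibniz_lie, hxy, hxz, zero_lie, lie_zero, add_zero])

theorem two_step_of_periodic_derivation (L : Type*) [LieRing L] [LieAlgebra ℂ L]
    [FiniteDimensional ℂ L] (D : LieDerivation ℂ L L) (m : ℕ) (hm : 1 ≤ m)
    (hDm : D.toLinearMap ^ m = 1) :
    ∀ x y z : L, ⁅x, ⁅y, z⁆⁆ = 0 := by
  have hm₀ : m ≠ 0 := by omega
  have hD (μ : ℂ) (hμ : HasEigenvalue D.toLinearMap μ) : ‖μ‖ = 1 :=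
    Complex.norm_eq_one_of_pow_eq_one (hμ.pow_eq_one_of_pow_eq_one hDm) hm₀
  have hspan : Submodule.span ℂ (⋃ μ, (eigenspace D.toLinearMap μ : Set L)) = ⊤ := by
    rw [← Submodule.iSup_eq_span]
    exact iSup_eigenspace_eq_top_of_pow_eq_one (Nat.cast_ne_zero.mpr hm₀) hDm
  refine LieAlgebra.lie_lie_eq_zero_of_span_eq_top hspan fun x hx y hy z hz ↦ ?_
  obtain ⟨a, hx⟩ := Set.mem_iUnion.mp hx
  obtain ⟨b, hy⟩ := Set.mem_iUnion.mp hy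
  obtain ⟨c, hz⟩ := Set.mem_iUnion.mp hz
  exact D.lie_lie_eq_zero_of_mem_eigenspace hD hx hy hz
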